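/- Let A be the adjacency matrix of the unitary Cayley graph of ℤ/4ℤ (the 4-cycle, with a adjacent to b iff a − b ≡ ±1 mod 4), regarded over ℂ. Then for every t ∈ ℝ and all j, k ∈ ℤ/4ℤ, the (j,k) entry of exp(itA) equals cos²(t) if j = k, equals i·sin(t)·cos(t) if j − k ≡ ±1 (mod 4), and equals −sin²(t) if j − k ≡ 2 (mod 4). -/

import Mathlib

open Matrix

/-- The standard basis vector `e_u` in `ℂ^V`. -/
noncomputable def stdVec {V : Type*} (u : V) : V → ℂ :=
  letI := Classical.decEq V
  Pi.single u 1

/-- The transition matrix `H(t) = exp(i t A)` of a graph with adjacency matrix `A`. -/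
noncomputable def transMatrix {V : Type*} [Fintype V] (A : Matrix V V ℂ) (t : ℝ) :
    Matrix V V ℂ :=
  letI := Classical.decEq V
  NormedSpace.exp ((Complex.I * (t : ℂ)) • A)

/-- Quantum fractional revival from `u` to `v` at time `t`. -/
def hasQFR {V : Type*} [Fintype V] (A : Matrix V V ℂ) (u v : V) (t : ℝ) : Prop :=
  u ≠ v ∧ ∃ α β : ℂ, β ≠ 0 ∧
    (transMatrix A t) *ᵥ stdVec u = α • stdVec u + β • stdVec v

/-- The unitary Cayley graph of a commutative ring: distinct `a, b` are adjacent
iff `a - b` is a unit. -/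
def unitaryCayleyGraph (R : Type*) [CommRing R] : SimpleGraph R where
  Adj a b := a ≠ b ∧ IsUnit (a - b)
  symm := ⟨by
    rintro a b ⟨h1, h2⟩
    refine ⟨h1.symm, ?_⟩
    rw [← neg_sub]
    exact h2.neg⟩
  loopless := ⟨fun a h => h.1 rfl⟩

/-- The adjacency matrix (over `ℂ`) of the unitary Cayley graph of `R`. -/
noncomputable def ucMatrix (R : Type*) [CommRing R] : Matrix R R ℂ :=
  letI := Classical.decEq R
  letI := Classical.decRel (unitaryCayleyGraph R).Adj
  (unitaryCayleyGraph R).adjMatrix ℂ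

/-- The adjacency matrix (over `ℂ`) of a simple graph. -/
noncomputable def adjMat {V : Type*} (G : SimpleGraph V) : Matrix V V ℂ :=
  letI := Classical.decEq V
  letI := Classical.decRel G.Adj
  G.adjMatrix ℂ

/-!
The unitary Cayley graph of `ℤ/4` is the 4-cycle. Its adjacency matrix is `X + Y`, where `X`, `Y`
are the permutation matrices of the commuting involutions `x ↦ 1 - x` and `x ↦ -1 - x`, and
`X * Y` is the permutation matrix of the antipodal shift `x ↦ x + 2`. An involution satisfies
`exp (z • X) = cosh z • 1 + sinh z • X`, hence
`exp (i t (X + Y)) = (cos t + i sin t X) (cos t + i sin t Y)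
                   = cos² t + i sin t cos t (X + Y) - sin² t X Y`.
-/

theorem NormedSpace.exp_smul_of_mul_self_eq_one {𝔸 : Type*} [Ring 𝔸] [Algebra ℂ 𝔸]
    [TopologicalSpace 𝔸] [IsTopologicalRing 𝔸] [ContinuousSMul ℂ 𝔸] [T2Space 𝔸] {x : 𝔸}
    (hx : x * x = 1) (z : ℂ) :
    NormedSpace.exp (z • x) = Complex.cosh z • 1 + Complex.sinh z • x := by
  have hx_even (n : ℕ) : x ^ (2 * n) = 1 := by rw [pow_mul, sq, hx, one_pow]
  rw [NormedSpace.exp_eq_tsum ℂ]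
  refine HasSum.tsum_eq (HasSum.even_add_odd ?_ ?_)
  · convert (Complex.hasSum_cosh z).smul_const (1 : 𝔸) using 2 with n
    rw [smul_pow, hx_even, smul_smul, div_eq_inv_mul]
  · convert (Complex.hasSum_sinh z).smul_const x using 2 with n
    rw [smul_pow, pow_succ x, hx_even, one_mul, smul_smul, div_eq_inv_mul]

theorem Matrix.exp_smul_add_of_mul_self_eq_one {m : Type*} [Fintype m] [DecidableEq m]
    {X Y : Matrix m m ℂ} (hX : X * X = 1) (hY : Y * Y = 1) (hXY : Commute X Y) (z : ℂ) :
    NormedSpace.exp (z • (X + Y)) = Complex.cosh z ^ 2 • 1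
      + (Complex.sinh z * Complex.cosh z) • (X + Y) + Complex.sinh z ^ 2 • (X * Y) := by
  rw [smul_add, Matrix.exp_add_of_commute _ _ ((hXY.smul_left z).smul_right z),
    NormedSpace.exp_smul_of_mul_self_eq_one hX, NormedSpace.exp_smul_of_mul_self_eq_one hY]
  simp only [add_mul, mul_add, smul_mul_smul, one_mul, mul_one]
  module

theorem Equiv.subLeft_mul_self {G : Type*} [AddCommGroup G] (a : G) :
    Equiv.subLeft a * Equiv.subLeft a = 1 := by
  ext; simp

theorem Equiv.subLeft_mul_subLeft {G : Type*} [AddCommGroup G] (a b : G) :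
    Equiv.subLeft a * Equiv.subLeft b = Equiv.addRight (a - b) := by
  ext x
  simp only [Perm.mul_apply, subLeft_apply, coe_addRight]
  abel

theorem transMatrix_eq_exp {V : Type*} [Fintype V] [DecidableEq V] (A : Matrix V V ℂ) (t : ℝ) :
    transMatrix A t = NormedSpace.exp ((Complex.I * (t : ℂ)) • A) := by
  unfold transMatrix
  congr!

theorem unitaryCayleyGraph_zmod_four_adj (a b : ZMod 4) :
    (unitaryCayleyGraph (ZMod 4)).Adj a b ↔ a - b = 1 ∨ a - b = -1 := by
  change a ≠ b ∧ IsUnit (a - b) ↔ _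
  revert a b; decide

theorem ucMatrix_zmod_four_apply (a b : ZMod 4) :
    ucMatrix (ZMod 4) a b = if a - b = 1 ∨ a - b = -1 then 1 else 0 := by
  simp only [ucMatrix, SimpleGraph.adjMatrix_apply, unitaryCayleyGraph_zmod_four_adj]

theorem ucMatrix_zmod_four :
    ucMatrix (ZMod 4) = Equiv.Perm.permMatrix ℂ (Equiv.subLeft (1 : ZMod 4))
      + Equiv.Perm.permMatrix ℂ (Equiv.subLeft (-1 : ZMod 4)) := by
  ext a b
  obtain ⟨hodd, hexcl⟩ : (a - b = 1 ∨ a - b = -1 ↔ 1 - a = b ∨ -1 - a = b) ∧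
      ¬(1 - a = b ∧ -1 - a = b) := by
    revert a b; decide
  simp only [ucMatrix_zmod_four_apply, Matrix.add_apply, PEquiv.toMatrix_apply,
    Equiv.toPEquiv_apply, Option.mem_def, Option.some_inj, Equiv.subLeft_apply, hodd]
  split_ifs <;> (try norm_num) <;> tauto

theorem transMatrix_ucMatrix_zmod_four (t : ℝ) :
    transMatrix (ucMatrix (ZMod 4)) t = (Real.cos t : ℂ) ^ 2 • 1
      + (Complex.I * Real.sin t * Real.cos t) • ucMatrix (ZMod 4)
      - (Real.sin t : ℂ) ^ 2 • Equiv.Perm.permMatrix ℂ (Equiv.addRight (2 : ZMod 4)) := by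
  set X := Equiv.Perm.permMatrix ℂ (Equiv.subLeft (1 : ZMod 4))
  set Y := Equiv.Perm.permMatrix ℂ (Equiv.subLeft (-1 : ZMod 4))
  have hX : X * X = 1 := by rw [← permMatrix_mul, Equiv.subLeft_mul_self, permMatrix_one]
  have hY : Y * Y = 1 := by rw [← permMatrix_mul, Equiv.subLeft_mul_self, permMatrix_one]
  have hXY : X * Y = Equiv.Perm.permMatrix ℂ (Equiv.addRight 2) := by
    rw [← permMatrix_mul, Equiv.subLeft_mul_subLeft]; rfl
  have hYX : Y * X = Equiv.Perm.permMatrix ℂ (Equiv.addRight 2) := by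
    rw [← permMatrix_mul, Equiv.subLeft_mul_subLeft]; rfl
  rw [transMatrix_eq_exp, ucMatrix_zmod_four,
    Matrix.exp_smul_add_of_mul_self_eq_one hX hY (hXY.trans hYX.symm), hXY, mul_comm,
    Complex.cosh_mul_I, Complex.sinh_mul_I, mul_pow, Complex.I_sq, ← Complex.ofReal_cos,
    ← Complex.ofReal_sin]
  module

/-- entries of the transition matrix of the unitary Cayley graph of `ℤ/4`:
`cos² t` on the diagonal, `i sin t cos t` for `j - k ≡ ±1`, `-sin² t` for `j - k ≡ 2`. -/
theorem transition_matrix_zmod_four (t : ℝ) (j k : ZMod 4) :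
    (j = k → transMatrix (ucMatrix (ZMod 4)) t j k = ((Real.cos t : ℂ)) ^ 2) ∧
    (j - k = 1 ∨ j - k = -1 →
      transMatrix (ucMatrix (ZMod 4)) t j k =
        Complex.I * (Real.sin t : ℂ) * (Real.cos t : ℂ)) ∧
    (j - k = 2 → transMatrix (ucMatrix (ZMod 4)) t j k = -((Real.sin t : ℂ)) ^ 2) := by
  have hantipodal : j + 2 = k ↔ j - k = 2 := by
    revert j k; decide
  simp only [transMatrix_ucMatrix_zmod_four, Matrix.sub_apply, Matrix.add_apply,
    Matrix.smul_apply, Matrix.one_apply, ucMatrix_zmod_four_apply, PEquiv.toMatrix_apply,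
    Equiv.toPEquiv_apply, Option.mem_def, Option.some_inj, Equiv.coe_addRight, smul_eq_mul,
    ← sub_eq_zero (a := j), hantipodal]
  generalize j - k = d
  refine ⟨?_, ?_, ?_⟩ <;> rintro (rfl | rfl) <;> simp +decide
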